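/- arXiv:2510.14916 — 3 statements merged into one kernel-verified Lean document; each statement's English description precedes it below -/
import Mathlib

section
/- Let V be an M × N real matrix with M > N, let w ∈ ℝ^M have strictly positive entries, and set η = Vᵀw. Then there exists a vector u ∈ ℝ^M with nonnegative entries, at most N nonzero entries, and Vᵀu = η. -/
/-!
A nonnegative combination `∑ wᵢ vᵢ` whose support has more than `dim E` indices admits a
relation `∑ cᵢ vᵢ = 0` supported on that support with some `cᵢ > 0`. Moving from `w` along `-c`
until the first coordinate hits zero keeps the weights nonnegative and the combination unchanged,
and shrinks the support; repeat until the support has at most `dim E` indices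
(conic Carathéodory).
-/

open Function Module Matrix

section Caratheodory

variable {ι 𝕜 E : Type*} [Fintype ι] [Field 𝕜] [LinearOrder 𝕜] [IsStrictOrderedRing 𝕜]

/-- The step `t = min {wᵢ / cᵢ | cᵢ > 0}` of the ratio test. -/
theorem exists_nonneg_sub_smul_eq_zero {w c : ι → 𝕜} (hw : 0 ≤ w) (hc : ∃ i, 0 < c i) :
    ∃ t : 𝕜, 0 ≤ w - t • c ∧ ∃ i, 0 < c i ∧ (w - t • c) i = 0 := by
  classical
  obtain ⟨i₀, hi₀, hmin⟩ := (Finset.univ.filter (0 < c ·)).exists_min_image (fun i => w i / c i)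
    (by simpa [Finset.filter_nonempty_iff] using hc)
  replace hi₀ : 0 < c i₀ := by simpa using hi₀
  have ht : 0 ≤ w i₀ / c i₀ := div_nonneg (hw i₀) hi₀.le
  refine ⟨w i₀ / c i₀, fun j => ?_, i₀, hi₀, by simp [div_mul_cancel₀ _ hi₀.ne']⟩
  suffices w i₀ / c i₀ * c j ≤ w j by simpa using this
  rcases lt_or_ge 0 (c j) with hj | hj
  · exact (le_div_iff₀ hj).mp (hmin j (by simpa using hj))
  · exact (mul_nonpos_of_nonneg_of_nonpos ht hj).trans (hw j)

variable [AddCommGroup E] [Module 𝕜 E] [FiniteDimensional 𝕜 E]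

theorem exists_pos_relation_of_finrank_lt_card (v : ι → E) {s : Finset ι}
    (hs : finrank 𝕜 E < s.card) :
    ∃ c : ι → 𝕜, support c ⊆ s ∧ ∑ i, c i • v i = 0 ∧ ∃ i, 0 < c i := by
  have hdep : ¬LinearIndepOn 𝕜 v (s : Set ι) := fun h =>
    hs.not_ge (by simpa using h.linearIndependent.fintype_card_le_finrank)
  obtain ⟨f, hf, i, his, hfi⟩ := not_linearIndepOn_finset_iff.mp hdep
  have hrel : ∑ j, (s : Set ι).indicator f j • v j = 0 := by
    simp_rw [← Set.indicator_smul_apply_left, Finset.sum_indicator_subset _ (Finset.subset_univ s),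
      hf]
  have hsupp : support ((s : Set ι).indicator f) ⊆ s := Set.support_indicator_subset
  rcases hfi.lt_or_gt with hneg | hpos
  · refine ⟨-(s : Set ι).indicator f, by rwa [support_neg], ?_, i, ?_⟩
    · simp [neg_smul, Finset.sum_neg_distrib, hrel]
    · simpa [Set.indicator_of_mem (Finset.mem_coe.mpr his)] using hneg
  · exact ⟨_, hsupp, hrel, i, by simpa [Set.indicator_of_mem (Finset.mem_coe.mpr his)] using hpos⟩

theorem exists_nonneg_support_ssubset_of_finrank_lt (v : ι → E) {w : ι → 𝕜} (hw : 0 ≤ w)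
    (h : finrank 𝕜 E < (support w).ncard) :
    ∃ u : ι → 𝕜, 0 ≤ u ∧ support u ⊂ support w ∧ ∑ i, u i • v i = ∑ i, w i • v i := by
  classical
  obtain ⟨c, hcw, hc, hpos⟩ := exists_pos_relation_of_finrank_lt_card v
    (s := (support w).toFinset) (by rwa [← Set.ncard_eq_toFinset_card'])
  rw [Set.coe_toFinset] at hcw
  obtain ⟨t, hnonneg, i, hci, hzero⟩ := exists_nonneg_sub_smul_eq_zero hw hpos
  have hsub : support (w - t • c) ⊆ support w :=
    (support_sub _ _).trans <| Set.union_subset le_rfl <| (support_smul_subset_right _ _).trans hcw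
  have hi : i ∈ support w \ support (w - t • c) := ⟨hcw hci.ne', notMem_support.mpr hzero⟩
  refine ⟨w - t • c, hnonneg, (Set.ssubset_iff_of_subset hsub).mpr ⟨i, hi⟩, ?_⟩
  simp [sub_smul, mul_smul, Finset.sum_sub_distrib, ← Finset.smul_sum, hc]

theorem exists_nonneg_support_subset_ncard_le_finrank (v : ι → E) {w : ι → 𝕜} (hw : 0 ≤ w) :
    ∃ u : ι → 𝕜, 0 ≤ u ∧ support u ⊆ support w ∧ (support u).ncard ≤ finrank 𝕜 E ∧
      ∑ i, u i • v i = ∑ i, w i • v i := by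
  induction hn : (support w).ncard using Nat.strong_induction_on generalizing w with
  | _ n ih =>
  by_cases hle : (support w).ncard ≤ finrank 𝕜 E
  · exact ⟨w, hw, le_rfl, hle, rfl⟩
  obtain ⟨u, hu, hssub, hsum⟩ := exists_nonneg_support_ssubset_of_finrank_lt v hw (not_le.mp hle)
  obtain ⟨u', hu', hsub', hcard', hsum'⟩ := ih _ (hn ▸ Set.ncard_lt_ncard hssub) hu rfl
  exact ⟨u', hu', hsub'.trans hssub.subset, hcard', hsum'.trans hsum⟩

end Caratheodory

theorem finite_tchakaloff_matrix_general (M N : ℕ)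
    (V : Matrix (Fin M) (Fin N) ℝ) (w : Fin M → ℝ) (hw : ∀ m, 0 < w m) :
    ∃ u : Fin M → ℝ, (∀ m, 0 ≤ u m) ∧ {m | u m ≠ 0}.ncard ≤ N ∧
      Vᵀ *ᵥ u = Vᵀ *ᵥ w := by
  obtain ⟨u, hu, -, hcard, hsum⟩ :=
    exists_nonneg_support_subset_ncard_le_finrank V (w := w) fun m => (hw m).le
  refine ⟨u, hu, hcard.trans_eq (finrank_fin_fun ℝ), ?_⟩
  simpa only [mulVec_transpose, vecMul_eq_sum] using hsum

/-- Finite Tchakaloff theorem, linear-algebraic form. -/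
theorem finite_tchakaloff_matrix (M N : ℕ) (hMN : M > N)
    (V : Matrix (Fin M) (Fin N) ℝ) (w : Fin M → ℝ) (hw : ∀ m, 0 < w m) :
    ∃ u : Fin M → ℝ, (∀ m, 0 ≤ u m) ∧ {m | u m ≠ 0}.ncard ≤ N ∧
      Vᵀ *ᵥ u = Vᵀ *ᵥ w :=
  finite_tchakaloff_matrix_general M N V w hw
end

section
/- Let w ∈ ℝ^{N+1} with w > 0 and n ∈ ℝ^{N+1} with all entries nonzero, and suppose the index m minimizing w_k/|n_k| over k ∈ [N+1] is unique with optimality gap ε = min_{k ≠ m} (w_k − |n_k/n_m| w_m) > 0. If w̃ ∈ ℝ^{N+1} satisfies ‖w − w̃‖₁ < ε/(1 + ‖n‖₁/|n_m|), then m is also the unique minimizer of w̃_k/|n_k| over k ∈ [N+1]. -/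
/-! The perturbed gap `w̃ₖ - rₖ w̃ₘ`, with `rₖ = |nₖ / nₘ|`, differs from the original gap
`wₖ - rₖ wₘ ≥ ε` by at most `|wₖ - w̃ₖ| + rₖ |wₘ - w̃ₘ| ≤ (1 + rₖ) ‖w - w̃‖₁`, and
`rₖ ≤ ‖n‖₁ / |nₘ|`, so the perturbed gap stays positive. -/

open Finset

lemma mul_lt_of_le_sub_mul_of_perturb {a b a' b' r ε : ℝ} (hr : 0 ≤ r)
    (hgap : ε ≤ a - r * b) (hpert : |a - a'| + r * |b - b'| < ε) : r * b' < a' := by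
  have ha : a - a' ≤ |a - a'| := le_abs_self _
  have hb : b' - b ≤ |b - b'| := abs_sub_comm b b' ▸ le_abs_self _
  nlinarith [mul_le_mul_of_nonneg_left hb hr]

lemma abs_sub_add_mul_abs_sub_le_sum {ι : Type*} [Fintype ι] (w wt : ι → ℝ) (k m : ι)
    {r : ℝ} (hr : 0 ≤ r) :
    |w k - wt k| + r * |w m - wt m| ≤ (1 + r) * ∑ j, |w j - wt j| := by
  have hle : ∀ i, |w i - wt i| ≤ ∑ j, |w j - wt j| := fun i =>
    single_le_sum (f := fun j => |w j - wt j|) (fun j _ => abs_nonneg _) (mem_univ i)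
  nlinarith [hle k, mul_le_mul_of_nonneg_left (hle m) hr]

lemma div_lt_div_of_div_mul_lt {x y p q : ℝ} (hp : 0 < p) (hq : 0 < q)
    (h : q / p * x < y) : x / p < y / q := by
  rw [div_lt_div_iff₀ hp hq]
  calc x * q = q / p * x * p := by field_simp
    _ < y * p := mul_lt_mul_of_pos_right h hp

theorem pruning_index_stable_general (N : ℕ) (w n : Fin (N + 1) → ℝ)
    (hn : ∀ k, n k ≠ 0)
    (m : Fin (N + 1))
    (ε : ℝ)
    (hgap : ∀ k, k ≠ m → ε ≤ w k - |n k / n m| * w m)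
    (wt : Fin (N + 1) → ℝ)
    (hpert : ∑ k, |w k - wt k| < ε / (1 + (∑ k, |n k|) / |n m|)) :
    ∀ k, k ≠ m → wt m / |n m| < wt k / |n k| := by
  intro k hk
  have hnm : 0 < |n m| := abs_pos.mpr (hn m)
  have hnk : 0 < |n k| := abs_pos.mpr (hn k)
  set r := |n k| / |n m|
  have hr : 0 ≤ r := by positivity
  have hrS : r ≤ (∑ j, |n j|) / |n m| :=
    div_le_div_of_nonneg_right
      (single_le_sum (f := fun j => |n j|) (fun j _ => abs_nonneg _) (mem_univ k)) hnm.le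
  have hpert_k : |w k - wt k| + r * |w m - wt m| < ε :=
    calc _ ≤ (1 + r) * ∑ j, |w j - wt j| := abs_sub_add_mul_abs_sub_le_sum w wt k m hr
      _ ≤ (1 + (∑ j, |n j|) / |n m|) * ∑ j, |w j - wt j| := by gcongr
      _ < ε := (lt_div_iff₀' (by positivity)).mp hpert
  have hgap_k : ε ≤ w k - r * w m := by simpa only [abs_div] using hgap k hk
  exact div_lt_div_of_div_mul_lt hnm hnk (mul_lt_of_le_sub_mul_of_perturb hr hgap_k hpert_k)

/-- Stability of the pruned-index selection: if the optimality gap is `ε` and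
the perturbation is small enough, the same index minimizes the perturbed
ratios. -/
theorem pruning_index_stable (N : ℕ) (w n : Fin (N + 1) → ℝ)
    (hw : ∀ k, 0 < w k) (hn : ∀ k, n k ≠ 0)
    (m : Fin (N + 1))
    (hmin : ∀ k, k ≠ m → w m / |n m| < w k / |n k|)
    (ε : ℝ) (hε : 0 < ε)
    (hgap : ∀ k, k ≠ m → ε ≤ w k - |n k / n m| * w m)
    (wt : Fin (N + 1) → ℝ)
    (hpert : ∑ k, |w k - wt k| < ε / (1 + (∑ k, |n k|) / |n m|)) :
    ∀ k, k ≠ m → wt m / |n m| < wt k / |n k| :=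
  pruning_index_stable_general N w n hn m ε hgap wt hpert
end

section
/- Let w, w̃ ∈ ℝ^{N+1} with w, w̃ > 0, let n ∈ ℝ^{N+1} with n_m ≠ 0 for a fixed index m, and set c = w_m/n_m and c̃ = w̃_m/n_m. Then ‖(w − c·n) − (w̃ − c̃·n)‖₁ ≤ (1 + ‖n‖₁/|n_m|) · ‖w − w̃‖₁. -/
/-!
Pruning `w ↦ w - (w m / n m) • n` is linear in `w`, so the error after pruning is the pruned
error `v = w - wt`. By the triangle inequality its `ℓ¹` norm is at most
`‖v‖₁ + |v m| ‖n‖₁ / |n m|`, and `|v m| ≤ ‖v‖₁`.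
-/

open Finset

variable {ι 𝕜 : Type*} [Fintype ι] [Field 𝕜] [LinearOrder 𝕜] [IsStrictOrderedRing 𝕜]

theorem sum_abs_sub_div_mul_le (v n : ι → 𝕜) (m : ι) :
    ∑ k, |v k - v m / n m * n k| ≤ (1 + (∑ k, |n k|) / |n m|) * ∑ k, |v k| := by
  calc ∑ k, |v k - v m / n m * n k|
      ≤ ∑ k, (|v k| + |v m| / |n m| * |n k|) := by
        gcongr with k
        rw [← abs_div, ← abs_mul]
        exact abs_sub _ _
    _ = ∑ k, |v k| + |v m| / |n m| * ∑ k, |n k| := by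
        rw [sum_add_distrib, mul_sum]
    _ ≤ ∑ k, |v k| + (∑ k, |v k|) / |n m| * ∑ k, |n k| := by
        gcongr
        exact single_le_sum (fun k _ => abs_nonneg (v k)) (mem_univ m)
    _ = (1 + (∑ k, |n k|) / |n m|) * ∑ k, |v k| := by ring

theorem pruning_error_propagation_general (N : ℕ) (w wt n : Fin (N + 1) → ℝ)
    (m : Fin (N + 1)) :
    ∑ k, |(w k - (w m / n m) * n k) - (wt k - (wt m / n m) * n k)| ≤
      (1 + (∑ k, |n k|) / |n m|) * ∑ k, |w k - wt k| := by
  have prune_sub (k : Fin (N + 1)) :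
      (w k - (w m / n m) * n k) - (wt k - (wt m / n m) * n k) =
        (w - wt) k - (w - wt) m / n m * n k := by
    simp only [Pi.sub_apply]
    ring
  simp_rw [prune_sub]
  exact sum_abs_sub_div_mul_le (w - wt) n m

/-- Per-iteration error propagation bound for the SCSP algorithm. -/
theorem pruning_error_propagation (N : ℕ) (w wt n : Fin (N + 1) → ℝ)
    (hw : ∀ k, 0 < w k) (hwt : ∀ k, 0 < wt k)
    (m : Fin (N + 1)) (hnm : n m ≠ 0) :
    ∑ k, |(w k - (w m / n m) * n k) - (wt k - (wt m / n m) * n k)| ≤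
      (1 + (∑ k, |n k|) / |n m|) * ∑ k, |w k - wt k| :=
  pruning_error_propagation_general N w wt n m
end
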